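/- arXiv:math/0608242 — 3 statements merged into one kernel-verified Lean document; each statement's English description precedes it below -/
import Mathlib

section
/- Let f be a nonnegative function on finite sequences over a set Y defined by f(y_1,...,y_n) = f(∅) ∏_{i=1}^n ∏_{z ⊆ {y_1,...,y_{i-1}}} φ(y_i, z), where φ(u, z) = 1 whenever z is not a u-clique with respect to a reflexive relation ~ (a u-clique is a finite set z with u ~ y for all y ∈ z). Then f is hereditary: if f(y) > 0 then f(z) > 0 for every subsequence z of y. -/
/-!
`f y > 0` exactly when every factor `φ(yᵢ, w)`, with `w` a subset of the entries before `yᵢ`,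
is positive. If `z` is a subsequence of `y`, each entry of `z` occurs in `y` after all entries
preceding it in `z`, so every factor of `z` is already a factor of `y`.
-/

theorem Finset.prod_pos_iff_of_nonneg {ι R : Type*} [CommMonoidWithZero R] [PartialOrder R]
    [ZeroLEOneClass R] [PosMulStrictMono R] [Nontrivial R] {s : Finset ι} {f : ι → R}
    (h0 : ∀ i ∈ s, 0 ≤ f i) : 0 < ∏ i ∈ s, f i ↔ ∀ i ∈ s, 0 < f i :=
  ⟨fun h i hi => (h0 i hi).lt_of_ne' fun hz => h.ne' (Finset.prod_eq_zero hi hz),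
    Finset.prod_pos⟩

namespace List

variable {Y R : Type*} [DecidableEq Y] [Zero R] [LT R]

def FactorsPos (φ : Y → Finset Y → R) (y : List Y) : Prop :=
  ∀ p u q, y = p ++ u :: q → ∀ w ⊆ p.toFinset, 0 < φ u w

theorem factorsPos_iff_getD (φ : Y → Finset Y → R) (y : List Y) (d : Y) :
    y.FactorsPos φ ↔
      ∀ i < y.length, ∀ w ⊆ (y.take i).toFinset, 0 < φ (y.getD i d) w := by
  constructor
  · intro h i hi w hw
    have hy : y = y.take i ++ y[i] :: y.drop (i + 1) := by
      rw [← drop_eq_getElem_cons hi, take_append_drop]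
    rw [getD_eq_getElem y d hi]
    exact h _ _ _ hy w hw
  · rintro h p u q rfl w hw
    simpa using h p.length (by simp) w (by simpa using hw)

theorem FactorsPos.sublist {φ : Y → Finset Y → R} {y z : List Y} (h : y.FactorsPos φ)
    (hzy : z <+ y) : z.FactorsPos φ := by
  rintro p u q rfl w hw
  obtain ⟨r₁, r₂, rfl, hp, hu⟩ := append_sublist_iff.1 hzy
  obtain ⟨s₁, s₂, rfl, hmem, -⟩ := cons_sublist_iff.1 hu
  obtain ⟨s, t, rfl⟩ := append_of_mem hmem
  refine h (r₁ ++ s) u (t ++ s₂) (by simp) w (hw.trans fun x hx => ?_)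
  simp only [mem_toFinset, mem_append] at hx ⊢
  exact Or.inl (hp.subset hx)

end List

theorem cliqueFactorisation_hereditary_general {Y : Type*} [DecidableEq Y] [Inhabited Y]
    (φ : Y → Finset Y → ℝ) (hφ0 : ∀ u z, 0 ≤ φ u z)
    (f : List Y → ℝ) (hfe : 0 < f [])
    (hf : ∀ y : List Y,
      f y = f [] * ∏ i ∈ Finset.range y.length,
        ∏ z ∈ ((y.take i).toFinset).powerset, φ (y.getD i default) z) :
    ∀ y z : List Y, z.Sublist y → 0 < f y → 0 < f z := by
  have pos_iff (y : List Y) : 0 < f y ↔ y.FactorsPos φ := by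
    rw [hf, mul_pos_iff_of_pos_left hfe, List.factorsPos_iff_getD φ y default,
      Finset.prod_pos_iff_of_nonneg fun i _ => Finset.prod_nonneg fun w _ => hφ0 _ w]
    simp only [Finset.mem_range]
    refine forall₂_congr fun i _ => ?_
    rw [Finset.prod_pos_iff_of_nonneg fun w _ => hφ0 _ w]
    simp only [Finset.mem_powerset]
  intro y z hzy hy
  exact (pos_iff z).2 (((pos_iff y).1 hy).sublist hzy)

/-- A density on finite sequences defined by a clique factorisation, with interaction
function equal to `1` off cliques, is hereditary: `f(y) > 0` implies `f(z) > 0` for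
every subsequence `z` of `y`. -/
theorem cliqueFactorisation_hereditary {Y : Type*} [DecidableEq Y] [Inhabited Y]
    (r : Y → Y → Prop) (hrefl : ∀ u, r u u)
    (φ : Y → Finset Y → ℝ) (hφ0 : ∀ u z, 0 ≤ φ u z)
    (hφ1 : ∀ (u : Y) (z : Finset Y), ¬ (∀ v ∈ z, r u v) → φ u z = 1)
    (f : List Y → ℝ) (hfe : 0 < f [])
    (hf : ∀ y : List Y,
      f y = f [] * ∏ i ∈ Finset.range y.length,
        ∏ z ∈ ((y.take i).toFinset).powerset, φ (y.getD i default) z) :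
    ∀ y z : List Y, z.Sublist y → 0 < f y → 0 < f z :=
  cliqueFactorisation_hereditary_general φ hφ0 f hfe hf
end

section
/- Let f on finite sequences over Y satisfy the clique factorization f(y_1,...,y_n) = f(∅) ∏_{i=1}^n ∏_{z ⊆ {y_1,...,y_{i-1}}} φ(y_i, z) with φ(u,z) = 1 on non-u-cliques. Then for any sequence y with f(y) > 0 and any point u, the ratio f((y,u))/f(y) equals ∏_{z ⊆ ∂(u) ∩ {y_1,...,y_n}} φ(u, z), where ∂(u) = {v : u ~ v}; in particular the ratio depends only on u and its directed neighbours among the components of y. -/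
/-!
Appending `u` to `y` multiplies the clique product by the single new factor
`∏_{z ⊆ {y₁,…,yₙ}} φ(u, z)`, and every `z` in it that is not a `u`-clique contributes `1`.
-/

namespace List

theorem prod_range_length_append_singleton {α M : Type*} [CommMonoid M] [Inhabited α]
    (F : List α → α → M) (y : List α) (u : α) :
    ∏ i ∈ Finset.range (y ++ [u]).length, F ((y ++ [u]).take i) ((y ++ [u]).getD i default)
      = (∏ i ∈ Finset.range y.length, F (y.take i) (y.getD i default)) * F y u := by
  rw [length_append, length_singleton, Finset.prod_range_succ]
  congr 1
  · refine Finset.prod_congr rfl fun i hi => ?_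
    have hi : i < y.length := Finset.mem_range.1 hi
    rw [take_append_of_le_length hi.le, getD_eq_getElem?_getD, getD_eq_getElem?_getD,
      getElem?_append_left hi]
  · simp

end List

namespace Finset

theorem prod_powerset_filter_eq_prod_powerset {α M : Type*} [DecidableEq α] [CommMonoid M]
    (s : Finset α) (p : α → Prop) [DecidablePred p] (g : Finset α → M)
    (hg : ∀ z, ¬ (∀ v ∈ z, p v) → g z = 1) :
    ∏ z ∈ (s.filter p).powerset, g z = ∏ z ∈ s.powerset, g z := by
  refine prod_subset (powerset_mono.2 (filter_subset p s)) fun z hz hz' => hg z fun hp => hz' ?_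
  exact mem_powerset.2 fun v hv => mem_filter.2 ⟨mem_powerset.1 hz hv, hp v hv⟩

end Finset

theorem cliqueFactorisation_ratio_general {Y : Type*} [DecidableEq Y] [Inhabited Y]
    (r : Y → Y → Prop) [DecidableRel r]
    (φ : Y → Finset Y → ℝ)
    (hφ1 : ∀ (u : Y) (z : Finset Y), ¬ (∀ v ∈ z, r u v) → φ u z = 1)
    (f : List Y → ℝ)
    (hf : ∀ y : List Y,
      f y = f [] * ∏ i ∈ Finset.range y.length,
        ∏ z ∈ ((y.take i).toFinset).powerset, φ (y.getD i default) z) :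
    (∀ (y : List Y) (u : Y), 0 < f y →
        f (y ++ [u]) / f y
          = ∏ z ∈ (y.toFinset.filter (fun v => r u v)).powerset, φ u z)
    ∧ (∀ (y y' : List Y) (u : Y), 0 < f y → 0 < f y' →
        y.toFinset.filter (fun v => r u v) = y'.toFinset.filter (fun v => r u v) →
        f (y ++ [u]) / f y = f (y' ++ [u]) / f y') := by
  have ratio : ∀ (y : List Y) (u : Y), 0 < f y →
      f (y ++ [u]) / f y = ∏ z ∈ (y.toFinset.filter (fun v => r u v)).powerset, φ u z := by
    intro y u hy
    have hstep : f (y ++ [u]) = f y * ∏ z ∈ y.toFinset.powerset, φ u z := by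
      rw [hf (y ++ [u]), hf y, List.prod_range_length_append_singleton
        (fun x v => ∏ z ∈ x.toFinset.powerset, φ v z), mul_assoc]
    rw [hstep, mul_div_cancel_left₀ _ hy.ne', Finset.prod_powerset_filter_eq_prod_powerset _ _ _ (hφ1 u)]
  refine ⟨ratio, fun y y' u hy hy' hnbrs => ?_⟩
  rw [ratio y u hy, ratio y' u hy', hnbrs]

/-- For a density on finite sequences given by a clique factorisation (with interaction
function `φ` equal to `1` off cliques), the ratio `f((y,u))/f(y)` equals the product of
`φ(u, z)` over all subsets `z` of the directed neighbours of `u` among the components of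
`y`; in particular it depends only on `u` and these directed neighbours. -/
theorem cliqueFactorisation_ratio {Y : Type*} [DecidableEq Y] [Inhabited Y]
    (r : Y → Y → Prop) [DecidableRel r] (hrefl : ∀ u, r u u)
    (φ : Y → Finset Y → ℝ) (hφ0 : ∀ u z, 0 ≤ φ u z)
    (hφ1 : ∀ (u : Y) (z : Finset Y), ¬ (∀ v ∈ z, r u v) → φ u z = 1)
    (f : List Y → ℝ) (hfe : 0 < f [])
    (hf : ∀ y : List Y,
      f y = f [] * ∏ i ∈ Finset.range y.length,
        ∏ z ∈ ((y.take i).toFinset).powerset, φ (y.getD i default) z) :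
    (∀ (y : List Y) (u : Y), 0 < f y →
        f (y ++ [u]) / f y
          = ∏ z ∈ (y.toFinset.filter (fun v => r u v)).powerset, φ u z)
    ∧ (∀ (y y' : List Y) (u : Y), 0 < f y → 0 < f y' →
        y.toFinset.filter (fun v => r u v) = y'.toFinset.filter (fun v => r u v) →
        f (y ++ [u]) / f y = f (y' ++ [u]) / f y') :=
  cliqueFactorisation_ratio_general r φ hφ1 f hf
end

section
/- For the simple sequential inhibition interaction functions φ(x, ∅) = r_1 π(x) and φ(x, y) = 1{d(x, y) > r} exp[Σ_{z ⊆ y} (−1)^{|y∖z|} log(r_{|z|+1}/I(z))] (for nonempty y with I(z) > 0 for all z ⊆ y), the product form yields: if d(x_{n+1}, {x_1,...,x_n}) > r and I({x_1,...,x_n}) > 0 then ∏_{y ⊆ {x_1,...,x_n}} φ(x_{n+1}, y) = r_{n+1} π(x_{n+1}) / I({x_1,...,x_n}), and the product is 0 if d(x_{n+1}, {x_1,...,x_n}) ≤ r. -/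
/-!
On the event `d(u, x) > r` every indicator in the product equals `1`, so the product over the
nonempty `y ⊆ x` is the exponential of `∑_{∅ ≠ y ⊆ x} ∑_{w ⊆ y} (-1)^{|y \ w|} g(w)` with
`g(w) = log (r_{|w|+1} / I(w))`. Möbius inversion on the Boolean lattice of subsets of `x`
collapses the full double sum to `g(x)`, so the product is `exp (g(x) - g(∅)) = r_{n+1} / (I(x) r₁)`
(using `I(∅) = ∫_D π = 1`), and the factor `φ(u, ∅) = r₁ π(u)` gives the claim. If instead
`d(u, w) ≤ r` for some `w ∈ x`, the factor indexed by `{w}` vanishes.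
-/

open Finset

namespace Finset

variable {α R : Type*} [DecidableEq α] [Ring R]

theorem sum_Icc_neg_one_pow_card_sdiff {w x : Finset α} (hwx : w ⊆ x) :
    ∑ y ∈ Icc w x, (-1 : R) ^ #(y \ w) = if w = x then 1 else 0 := by
  have hinj : Set.InjOn (w ∪ ·) (x \ w).powerset := fun s hs t ht hst => by
    have hs : Disjoint s w := disjoint_of_subset_left (mem_powerset.1 hs) sdiff_disjoint
    have ht : Disjoint t w := disjoint_of_subset_left (mem_powerset.1 ht) sdiff_disjoint
    simpa [union_sdiff_cancel_left, hs.symm, ht.symm] using congr_arg (· \ w) hst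
  rw [Icc_eq_image_powerset hwx, sum_image hinj]
  have hshift : ∀ s ∈ (x \ w).powerset, (-1 : R) ^ #((w ∪ s) \ w) = ((-1 : ℤ) ^ #s : ℤ) := by
    intro s hs
    have hs : Disjoint w s := (disjoint_of_subset_left (mem_powerset.1 hs) sdiff_disjoint).symm
    simp [union_sdiff_cancel_left hs]
  rw [sum_congr rfl hshift, ← Int.cast_sum, sum_powerset_neg_one_pow_card]
  have hxw : x \ w = ∅ ↔ w = x :=
    sdiff_eq_empty_iff_subset.trans ⟨subset_antisymm hwx, fun h => h ▸ subset_rfl⟩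
  simp [hxw]

/-- Möbius inversion on the Boolean lattice of subsets of `x`. -/
theorem sum_powerset_sum_powerset_neg_one_pow_mul (x : Finset α) (g : Finset α → R) :
    ∑ y ∈ x.powerset, ∑ w ∈ y.powerset, (-1 : R) ^ #(y \ w) * g w = g x := by
  rw [sum_comm' (t' := x.powerset) (s' := fun w => Icc w x) (fun y w => by
    simp only [mem_powerset, mem_Icc]
    exact ⟨fun ⟨hwy, hyx⟩ => ⟨⟨hyx, hwy⟩, hyx.trans hwy⟩, fun ⟨h, _⟩ => h.symm⟩)]
  calc ∑ w ∈ x.powerset, ∑ y ∈ Icc w x, (-1 : R) ^ #(y \ w) * g w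
      = ∑ w ∈ x.powerset, (if w = x then 1 else 0) * g w := by
        refine sum_congr rfl fun w hw => ?_
        rw [← sum_mul, sum_Icc_neg_one_pow_card_sdiff (mem_powerset.1 hw)]
    _ = g x := by simp

theorem prod_powerset_erase_empty_exp_sum_neg_one_pow_mul_log (x : Finset α)
    {F : Finset α → ℝ} (hx : 0 < F x) (h0 : 0 < F ∅) :
    ∏ y ∈ x.powerset.erase ∅,
        Real.exp (∑ w ∈ y.powerset, (-1 : ℝ) ^ #(y \ w) * Real.log (F w)) = F x / F ∅ := by
  rw [← Real.exp_sum, sum_erase_eq_sub (empty_mem_powerset x),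
    sum_powerset_sum_powerset_neg_one_pow_mul, powerset_empty, sum_singleton, sdiff_self,
    bot_eq_empty, card_empty, pow_zero, one_mul, Real.exp_sub, Real.exp_log hx, Real.exp_log h0]

end Finset

open MeasureTheory
open scoped Classical

theorem simple_sequential_inhibition_product_general
    [DecidableEq (EuclideanSpace ℝ (Fin 2))]
    (D : Set (EuclideanSpace ℝ (Fin 2)))
    (π : EuclideanSpace ℝ (Fin 2) → ℝ)
    (hπ1 : ∫ z in D, π z = 1)
    (r : ℝ)
    (rseq : ℕ → ℝ) (hrseq : ∀ n, 0 < rseq n)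
    (I : Finset (EuclideanSpace ℝ (Fin 2)) → ℝ)
    (hI : ∀ x : Finset (EuclideanSpace ℝ (Fin 2)),
      I x = ∫ z in D, π z * (if ∀ w ∈ x, r < ‖z - w‖ then 1 else 0))
    (φ : EuclideanSpace ℝ (Fin 2) → Finset (EuclideanSpace ℝ (Fin 2)) → ℝ)
    (hφ0 : ∀ z, φ z ∅ = rseq 1 * π z)
    (hφ : ∀ (z : EuclideanSpace ℝ (Fin 2)) (y : Finset (EuclideanSpace ℝ (Fin 2))),
      y ≠ ∅ → (∀ w ∈ y.powerset, 0 < I w) →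
      φ z y = (if ∀ w ∈ y, r < ‖z - w‖ then 1 else 0) *
        Real.exp (∑ w ∈ y.powerset,
          (-1 : ℝ) ^ (y \ w).card * Real.log (rseq (w.card + 1) / I w)))
    (x : Finset (EuclideanSpace ℝ (Fin 2))) (u : EuclideanSpace ℝ (Fin 2))
    (hIx : ∀ w ∈ x.powerset, 0 < I w) :
    ((∀ w ∈ x, r < ‖u - w‖) →
      ∏ y ∈ x.powerset, φ u y = rseq (x.card + 1) * π u / I x)
    ∧ ((∃ w ∈ x, ‖u - w‖ ≤ r) → ∏ y ∈ x.powerset, φ u y = 0) := by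
  have hI0 : I ∅ = 1 := by simpa [hI ∅] using hπ1
  have hIsub : ∀ y ∈ x.powerset, ∀ w ∈ y.powerset, 0 < I w := fun y hy w hw =>
    hIx w (mem_powerset.2 ((mem_powerset.1 hw).trans (mem_powerset.1 hy)))
  refine ⟨fun hfar => ?_, fun ⟨w, hw, hnear⟩ => ?_⟩
  · have hfactor : ∀ y ∈ x.powerset.erase ∅, φ u y = Real.exp (∑ w ∈ y.powerset,
        (-1 : ℝ) ^ #(y \ w) * Real.log (rseq (#w + 1) / I w)) := fun y hy => by
      have hyx := mem_powerset.1 (mem_of_mem_erase hy)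
      rw [hφ u y (ne_of_mem_erase hy) (hIsub y (mem_of_mem_erase hy)),
        if_pos fun w hw => hfar w (hyx hw), one_mul]
    have hIx0 : 0 < I x := hIx x (mem_powerset_self x)
    rw [← mul_prod_erase _ _ (empty_mem_powerset x), hφ0, prod_congr rfl hfactor,
      prod_powerset_erase_empty_exp_sum_neg_one_pow_mul_log x (F := fun w => rseq (#w + 1) / I w)
        (div_pos (hrseq _) hIx0) (by simpa [hI0] using hrseq 1)]
    simp only [card_empty, zero_add, hI0, div_one]
    field_simp [(hrseq 1).ne']
  · have hw' : {w} ∈ x.powerset := mem_powerset.2 (singleton_subset_iff.2 hw)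
    refine prod_eq_zero hw' ?_
    rw [hφ u {w} (singleton_ne_empty w) (hIsub {w} hw'), if_neg (by simpa using hnear.not_gt),
      zero_mul]

/-- Simple sequential inhibition: with interaction functions `φ(x,∅) = r₁ π(x)` and, for
nonempty `y`, `φ(x,y) = 1{d(x,y) > r} exp[Σ_{z ⊆ y} (−1)^{|y∖z|} log(r_{|z|+1}/I(z))]`,
the product `∏_{y ⊆ {x₁,…,xₙ}} φ(x_{n+1}, y)` equals
`r_{n+1} π(x_{n+1}) / I({x₁,…,xₙ})` when `d(x_{n+1},{x₁,…,xₙ}) > r`, and `0` when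
`d(x_{n+1},{x₁,…,xₙ}) ≤ r`. -/
theorem simple_sequential_inhibition_product
    [DecidableEq (EuclideanSpace ℝ (Fin 2))]
    (D : Set (EuclideanSpace ℝ (Fin 2))) (hD : MeasurableSet D)
    (hDb : Bornology.IsBounded D)
    (π : EuclideanSpace ℝ (Fin 2) → ℝ) (hπ : ∀ z ∈ D, 0 < π z)
    (hπint : IntegrableOn π D volume) (hπ1 : ∫ z in D, π z = 1)
    (r : ℝ) (hr : 0 < r)
    (rseq : ℕ → ℝ) (hrseq : ∀ n, 0 < rseq n)
    (I : Finset (EuclideanSpace ℝ (Fin 2)) → ℝ)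
    (hI : ∀ x : Finset (EuclideanSpace ℝ (Fin 2)),
      I x = ∫ z in D, π z * (if ∀ w ∈ x, r < ‖z - w‖ then 1 else 0))
    (φ : EuclideanSpace ℝ (Fin 2) → Finset (EuclideanSpace ℝ (Fin 2)) → ℝ)
    (hφ0 : ∀ z, φ z ∅ = rseq 1 * π z)
    (hφ : ∀ (z : EuclideanSpace ℝ (Fin 2)) (y : Finset (EuclideanSpace ℝ (Fin 2))),
      y ≠ ∅ → (∀ w ∈ y.powerset, 0 < I w) →
      φ z y = (if ∀ w ∈ y, r < ‖z - w‖ then 1 else 0) *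
        Real.exp (∑ w ∈ y.powerset,
          (-1 : ℝ) ^ (y \ w).card * Real.log (rseq (w.card + 1) / I w)))
    (x : Finset (EuclideanSpace ℝ (Fin 2))) (u : EuclideanSpace ℝ (Fin 2))
    (hIx : ∀ w ∈ x.powerset, 0 < I w) :
    ((∀ w ∈ x, r < ‖u - w‖) →
      ∏ y ∈ x.powerset, φ u y = rseq (x.card + 1) * π u / I x)
    ∧ ((∃ w ∈ x, ‖u - w‖ ≤ r) → ∏ y ∈ x.powerset, φ u y = 0) :=
  simple_sequential_inhibition_product_general D π hπ1 r rseq hrseq I hI φ hφ0 hφ x u hIx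
end
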